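/- Let H = {x ∈ ℝⁿ : x₁ < 1}, P(y) = (2-y₁, y₂,…,y_n), and define the half-space Dirichlet heat kernel k_H(t,x,y) = k(t,x,y) - k(t,x,P(y)) where k is the Gaussian kernel. Then there exists a constant C = C(n) > 1 such that for all x, y ∈ H and t > 0: C⁻¹ (1 ∧ ((1-x₁)(1-y₁)/t)) k(t,x,y) ≤ k_H(t,x,y) ≤ C (1 ∧ ((1-x₁)(1-y₁)/t)) k(t,x,y). -/

import Mathlib

/-!
Reflecting `y` in the hyperplane `x₀ = 1` gives `‖x - P y‖² = ‖x - y‖² + 4 (1 - x₀) (1 - y₀)`,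
so the Gaussian factorises and `k t x y - k t x (P y) = (1 - e^{-s}) k t x y` with
`s = (1 - x₀) (1 - y₀) / t ≥ 0`. It remains that `(1 ∧ s) / 2 ≤ 1 - e^{-s} ≤ 1 ∧ s`, so `C = 2`.
-/

open Real

theorem one_sub_exp_neg_le_min_one (s : ℝ) : 1 - exp (-s) ≤ min 1 s :=
  le_min (by linarith [exp_pos (-s)]) (by linarith [add_one_le_exp (-s)])

theorem min_one_le_two_mul_one_sub_exp_neg {s : ℝ} (hs : 0 ≤ s) :
    min 1 s ≤ 2 * (1 - exp (-s)) := by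
  rcases le_total s 1 with hs1 | hs1
  · -- `(1 + s) (1 - s / 2) ≥ 1` on `[0, 1]`, so `exp (-s) ≤ 1 - s / 2`
    have h : exp (-s) ≤ 1 - s / 2 := by
      rw [exp_neg, inv_le_iff_one_le_mul₀ (exp_pos s)]
      nlinarith [add_one_le_exp s]
    rw [min_eq_right hs1]
    linarith
  · have h : exp (-s) ≤ exp (-1) := exp_le_exp.mpr (by linarith)
    rw [min_eq_left hs1]
    linarith [exp_neg_one_lt_half]

theorem EuclideanSpace.norm_sub_sq_of_reflect {ι : Type*} [Fintype ι] [DecidableEq ι] (i : ι)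
    {x y z : EuclideanSpace ℝ ι} (hz : ∀ j, z j = if j = i then 2 - y i else y j) :
    ‖x - z‖ ^ 2 = ‖x - y‖ ^ 2 + 4 * ((1 - x i) * (1 - y i)) := by
  have hcoord : ∀ j, (x - z) j ^ 2 =
      (x - y) j ^ 2 + if j = i then 4 * ((1 - x i) * (1 - y i)) else 0 := by
    intro j
    by_cases hj : j = i
    · subst hj
      simp only [PiLp.sub_apply, hz, if_true]
      ring
    · simp [hz, hj]
  simp only [EuclideanSpace.real_norm_sq_eq, hcoord, Finset.sum_add_distrib,
    Finset.sum_ite_eq', Finset.mem_univ, if_true]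

noncomputable def heatKernel {ι : Type*} [Fintype ι] (d t : ℝ) (x y : EuclideanSpace ℝ ι) : ℝ :=
  (4 * π * t) ^ (-d / 2) * exp (-‖x - y‖ ^ 2 / (4 * t))

section heatKernel

variable {ι : Type*} [Fintype ι] {d t : ℝ} {x y z : EuclideanSpace ℝ ι}

theorem heatKernel_pos (ht : 0 < t) : 0 < heatKernel d t x y := by
  unfold heatKernel
  have := pi_pos
  positivity

theorem heatKernel_sub_eq_of_norm_sub_sq {c : ℝ} (ht : t ≠ 0)
    (h : ‖x - z‖ ^ 2 = ‖x - y‖ ^ 2 + 4 * c) :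
    heatKernel d t x y - heatKernel d t x z = (1 - exp (-(c / t))) * heatKernel d t x y := by
  have hexp : exp (-‖x - z‖ ^ 2 / (4 * t)) = exp (-‖x - y‖ ^ 2 / (4 * t)) * exp (-(c / t)) := by
    rw [h, ← exp_add]
    congr 1
    field_simp
    ring
  simp only [heatKernel, hexp]
  ring

end heatKernel

theorem halfspace_heat_kernel_estimate (n : ℕ)
    (P : EuclideanSpace ℝ (Fin (n + 1)) → EuclideanSpace ℝ (Fin (n + 1)))
    (hP : ∀ (y : EuclideanSpace ℝ (Fin (n + 1))) (i : Fin (n + 1)),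
      P y i = if i = 0 then 2 - y 0 else y i)
    (k : ℝ → EuclideanSpace ℝ (Fin (n + 1)) → EuclideanSpace ℝ (Fin (n + 1)) → ℝ)
    (hk : ∀ s u v, k s u v =
      (4 * π * s) ^ (-(((n : ℝ) + 1)) / 2) * exp (-‖u - v‖ ^ 2 / (4 * s))) :
    ∃ C : ℝ, 1 < C ∧
      ∀ (x y : EuclideanSpace ℝ (Fin (n + 1))) (t : ℝ),
        x 0 < 1 → y 0 < 1 → 0 < t →
        C⁻¹ * (min 1 ((1 - x 0) * (1 - y 0) / t)) * k t x y ≤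
            k t x y - k t x (P y) ∧
          k t x y - k t x (P y) ≤
            C * (min 1 ((1 - x 0) * (1 - y 0) / t)) * k t x y := by
  refine ⟨2, one_lt_two, fun x y t hx hy ht => ?_⟩
  have hk' : ∀ u v, k t u v = heatKernel ((n : ℝ) + 1) t u v := hk t
  set s := (1 - x 0) * (1 - y 0) / t
  have hs : 0 ≤ s := div_nonneg (mul_nonneg (by linarith) (by linarith)) ht.le
  have hK : 0 ≤ heatKernel ((n : ℝ) + 1) t x y := (heatKernel_pos ht).le
  have hdiff : k t x y - k t x (P y) = (1 - exp (-s)) * k t x y := by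
    rw [hk', hk']
    exact heatKernel_sub_eq_of_norm_sub_sq ht.ne'
      (EuclideanSpace.norm_sub_sq_of_reflect 0 (hP y))
  rw [hdiff, hk']
  have hmin : 0 ≤ min 1 s := le_min zero_le_one hs
  constructor
  · refine mul_le_mul_of_nonneg_right ?_ hK
    linarith [min_one_le_two_mul_one_sub_exp_neg hs]
  · calc (1 - exp (-s)) * heatKernel _ t x y ≤ min 1 s * heatKernel _ t x y :=
          mul_le_mul_of_nonneg_right (one_sub_exp_neg_le_min_one s) hK
      _ ≤ 2 * min 1 s * heatKernel _ t x y := by nlinarith
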